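/- arXiv:2510.08382 — 2 statements merged into one kernel-verified Lean document; each statement's English description precedes it below -/
import Mathlib

section
/- Let Y be finite, ℓ a symmetric 0-1 loss with zero diagonal whose σ-sets form an antichain (no strict containments), and suppose σ(y₁) ≠ σ(y₂) for some y₁, y₂. Then for any fixed prediction ŷ ∈ Y, at most one of the two quantities E_{v ∼ Unif(σ(y₁))}[1_{ŷ ∉ σ(v)}] and E_{v ∼ Unif(σ(y₂))}[1_{ŷ ∉ σ(v)}] can be zero, and if one is zero the other is at least 1/|Y|. -/
theorem at_most_one_zero_error
    {Y : Type*} [Fintype Y] [DecidableEq Y]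
    (ℓ : Y → Y → Fin 2) (hsymm : ∀ a b : Y, ℓ a b = ℓ b a)
    (hdiag : ∀ y : Y, ℓ y y = 0)
    (σ : Y → Finset Y) (hσ : ∀ y : Y, σ y = Finset.univ.filter (fun y' => ℓ y y' = 0))
    (hanti : ∀ y₁ y₂ : Y, ¬ σ y₁ ⊂ σ y₂)
    (y₁ y₂ : Y) (hne : σ y₁ ≠ σ y₂) (yhat : Y) :
    let E : Y → ℝ := fun y =>
      (∑ v ∈ σ y, (if ℓ yhat v = 1 then (1 : ℝ) else 0)) / (σ y).card
    ¬ (E y₁ = 0 ∧ E y₂ = 0) ∧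
      (E y₁ = 0 → E y₂ ≥ 1 / (Fintype.card Y : ℝ)) ∧
      (E y₂ = 0 → E y₁ ≥ 1 / (Fintype.card Y : ℝ)) := by
  intro E
  have hmem : ∀ y v : Y, v ∈ σ y ↔ ℓ y v = 0 := by
    intro y v; rw [hσ]; simp
  have hself : ∀ y : Y, y ∈ σ y := fun y => (hmem y y).mpr (hdiag y)
  have hcardpos : ∀ y : Y, 0 < (σ y).card := fun y => Finset.card_pos.mpr ⟨y, hself y⟩
  have hnonneg : ∀ y v : Y, (0:ℝ) ≤ (if ℓ yhat v = 1 then (1 : ℝ) else 0) := by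
    intro y v; positivity
  have hE0 : ∀ y : Y, E y = 0 ↔ σ y ⊆ σ yhat := by
    intro y
    constructor
    · intro h v hv
      have hsum : (∑ v ∈ σ y, (if ℓ yhat v = 1 then (1 : ℝ) else 0)) = 0 := by
        rcases div_eq_zero_iff.mp h with h' | h'
        · exact h'
        · exact absurd h' (by exact_mod_cast (hcardpos y).ne')
      have := (Finset.sum_eq_zero_iff_of_nonneg (fun v _ => hnonneg y v)).mp hsum v hv
      have hne1 : ℓ yhat v ≠ 1 := by
        intro h1; rw [if_pos h1] at this; norm_num at this
      have h0 : ℓ yhat v = 0 := by omega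
      exact (hmem yhat v).mpr h0
    · intro h
      have hsum : (∑ v ∈ σ y, (if ℓ yhat v = 1 then (1 : ℝ) else 0)) = 0 := by
        apply Finset.sum_eq_zero
        intro v hv
        have := (hmem yhat v).mp (h hv)
        simp [this]
      simp only [E, hsum, zero_div]
  have heq : ∀ y : Y, E y = 0 → σ y = σ yhat := by
    intro y h
    rcases eq_or_ne (σ y) (σ yhat) with h' | h'
    · exact h'
    · exact absurd ⟨(hE0 y).mp h, fun hc => h' (Finset.Subset.antisymm ((hE0 y).mp h) hc)⟩
        (hanti y yhat)
  have hbound : ∀ y : Y, σ y ≠ σ yhat → E y ≥ 1 / (Fintype.card Y : ℝ) := by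
    intro y hneq
    have hnsub : ¬ σ y ⊆ σ yhat := by
      intro hc
      exact hanti y yhat ⟨hc, fun hc2 => hneq (Finset.Subset.antisymm hc hc2)⟩
    obtain ⟨v, hv, hv2⟩ := Finset.not_subset.mp hnsub
    have h1 : ℓ yhat v = 1 := by
      have : ℓ yhat v ≠ 0 := fun h0 => hv2 ((hmem yhat v).mpr h0)
      omega
    have hsum : (1:ℝ) ≤ ∑ v ∈ σ y, (if ℓ yhat v = 1 then (1 : ℝ) else 0) := by
      have := Finset.single_le_sum (f := fun v => (if ℓ yhat v = 1 then (1 : ℝ) else 0))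
        (fun v _ => hnonneg y v) hv
      simp only [if_pos h1] at this
      exact this
    have hcard : ((σ y).card : ℝ) ≤ (Fintype.card Y : ℝ) := by
      exact_mod_cast Finset.card_le_univ (σ y)
    have hNpos : (0:ℝ) < (Fintype.card Y : ℝ) := by
      have := hcardpos y
      have : (0:ℝ) < ((σ y).card : ℝ) := by exact_mod_cast this
      linarith
    exact div_le_div₀ (by linarith) hsum (by exact_mod_cast hcardpos y) hcard
  refine ⟨?_, ?_, ?_⟩
  · rintro ⟨h1, h2⟩
    exact hne ((heq y₁ h1).trans (heq y₂ h2).symm)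
  · intro h1
    exact hbound y₂ (fun hc => hne ((heq y₁ h1).trans hc.symm))
  · intro h2
    exact hbound y₁ (fun hc => hne (hc.trans (heq y₂ h2).symm))
end

section
/- For the set-learning loss on nonempty subsets of a finite set Y with |Y| ≥ 2, and any hypothesis class H of functions X → 2^Y \ {∅} whose members only output singletons, GNdim(H, ℓ) equals the Natarajan dimension of H (viewing singleton outputs as elements of Y). -/
open Classical in
/-- The set-learning 0-1 loss on subsets of `Y`. -/
noncomputable def setLoss {Y : Type*} (A B : Finset Y) : Fin 2 :=
  if A = B ∨ (A.card = 1 ∧ A ⊆ B) ∨ (B.card = 1 ∧ B ⊆ A) then 0 else 1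

open Classical in
/-- `σ(A)`: the nonempty labels on which `A` incurs zero set-learning loss. -/
noncomputable def setSigma {Y : Type*} [Fintype Y] (A : Finset Y) : Finset (Finset Y) :=
  Finset.univ.filter (fun B => B.Nonempty ∧ setLoss A B = 0)

/-- Natarajan shattering of a finite set `S` by a class `G` of functions. -/
def NShatters {X Z : Type*} [DecidableEq X] (G : Set (X → Z)) (S : Finset X) : Prop :=
  ∃ g₁ ∈ G, ∃ g₂ ∈ G, (∀ s ∈ S, g₁ s ≠ g₂ s) ∧
    ∀ S' ⊆ S, ∃ g ∈ G, (∀ s ∈ S', g s = g₁ s) ∧ ∀ s ∈ S \ S', g s = g₂ s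

/-- Generalized Natarajan shattering: equality of labels is replaced by equality of σ-sets. -/
def GNShatters {X Y : Type*} [DecidableEq X] (σ : Y → Finset Y)
    (H : Set (X → Y)) (S : Finset X) : Prop :=
  ∃ h₁ ∈ H, ∃ h₂ ∈ H, (∀ s ∈ S, σ (h₁ s) ≠ σ (h₂ s)) ∧
    ∀ S' ⊆ S, ∃ h ∈ H, (∀ s ∈ S', σ (h s) = σ (h₁ s)) ∧ ∀ s ∈ S \ S', σ (h s) = σ (h₂ s)

/-- The Natarajan dimension of a class `G`. -/
noncomputable def Ndim {X Z : Type*} [DecidableEq X] (G : Set (X → Z)) : ℕ∞ :=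
  sSup {n : ℕ∞ | ∃ S : Finset X, (S.card : ℕ∞) = n ∧ NShatters G S}

/-- The generalized Natarajan dimension of a class `H` with respect to `σ`. -/
noncomputable def GNdim {X Y : Type*} [DecidableEq X] (σ : Y → Finset Y)
    (H : Set (X → Y)) : ℕ∞ :=
  sSup {n : ℕ∞ | ∃ S : Finset X, (S.card : ℕ∞) = n ∧ GNShatters σ H S}

theorem setLoss_singleton_singleton_eq_zero_iff {Y : Type*} {a b : Y} :
    setLoss ({a} : Finset Y) {b} = 0 ↔ a = b := by
  simp [setLoss, eq_comm]

theorem setSigma_singleton_injective {Y : Type*} [Fintype Y] :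
    Function.Injective fun y : Y => setSigma ({y} : Finset Y) := by
  intro a b hab
  have hmem : ({a} : Finset Y) ∈ setSigma ({b} : Finset Y) := by
    rw [← show setSigma {a} = setSigma {b} from hab, setSigma, Finset.mem_filter]
    exact ⟨Finset.mem_univ _, Finset.singleton_nonempty a,
      setLoss_singleton_singleton_eq_zero_iff.mpr rfl⟩
  rw [setSigma, Finset.mem_filter] at hmem
  exact (setLoss_singleton_singleton_eq_zero_iff.mp hmem.2.2).symm

theorem gnShatters_image_comp_iff {X Y Z : Type*} [DecidableEq X] {σ : Y → Finset Y}
    {e : Z → Y} (he : Function.Injective fun z => σ (e z)) (G : Set (X → Z)) (S : Finset X) :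
    GNShatters σ ((e ∘ ·) '' G) S ↔ NShatters G S := by
  have hσe : ∀ a b, σ (e a) = σ (e b) ↔ a = b := fun _ _ => he.eq_iff
  simp only [GNShatters, NShatters, Set.exists_mem_image, Function.comp_apply, ne_eq, hσe]

theorem GNdim_eq_Ndim_of_gnShatters_iff {X Y Z : Type*} [DecidableEq X] {σ : Y → Finset Y}
    {H : Set (X → Y)} {G : Set (X → Z)} (h : ∀ S, GNShatters σ H S ↔ NShatters G S) :
    GNdim σ H = Ndim G := by
  simp only [GNdim, Ndim, h]

theorem eq_image_singleton_comp_of_card_eq_one {X Y : Type*} {H : Set (X → Finset Y)}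
    (hsingle : ∀ h ∈ H, ∀ x, (h x).card = 1) :
    H = ((singleton : Y → Finset Y) ∘ ·) '' {g : X → Y | ∃ h ∈ H, ∀ x : X, h x = {g x}} := by
  ext h
  constructor
  · intro hh
    choose g hg using fun x => Finset.card_eq_one.mp (hsingle h hh x)
    exact ⟨g, ⟨h, hh, hg⟩, (funext hg).symm⟩
  · rintro ⟨g, ⟨h', hh', hg⟩, rfl⟩
    rwa [show h' = _ from funext hg] at hh'

theorem setLearning_GNdim_eq_Ndim_general
    {X : Type*} [DecidableEq X]
    {Y : Type*} [Fintype Y]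
    (H : Set (X → Finset Y)) (hsingle : ∀ h ∈ H, ∀ x : X, (h x).card = 1) :
    GNdim setSigma H = Ndim {g : X → Y | ∃ h ∈ H, ∀ x : X, h x = {g x}} := by
  refine GNdim_eq_Ndim_of_gnShatters_iff fun S => ?_
  rw [← gnShatters_image_comp_iff setSigma_singleton_injective,
    ← eq_image_singleton_comp_of_card_eq_one hsingle]

theorem setLearning_GNdim_eq_Ndim
    {X : Type*} [DecidableEq X]
    {Y : Type*} [Fintype Y] [DecidableEq Y]
    (hY : 2 ≤ Fintype.card Y)
    (H : Set (X → Finset Y)) (hsingle : ∀ h ∈ H, ∀ x : X, (h x).card = 1) :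
    GNdim setSigma H = Ndim {g : X → Y | ∃ h ∈ H, ∀ x : X, h x = {g x}} :=
  setLearning_GNdim_eq_Ndim_general H hsingle
end
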